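/- Let n = 2m, let f : F_{2^n} → F_2 be bent with dual f*, let α ∈ F_{2^n}, and let μ_2, …, μ_r ∈ F_{2^n} be nonzero elements such that Tr(α μ_i) = 0 for all 2 ≤ i ≤ r and D_{μ_i} D_{μ_j} f* = 0 (identically) for all 2 ≤ i < j ≤ r. Then for every Boolean function F : F_2^r → F_2, the function h(x) = f(x) + F(f(x)+f(x+α), Tr(μ_2 x), Tr(μ_3 x), …, Tr(μ_r x)) is bent, with dual h*(x) = f*(x) + F(φ_1(x), …, φ_r(x)), where φ_1(x) = Tr(α x) and φ_i(x) = f*(x) + f*(x + μ_i) for 2 ≤ i ≤ r. -/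
import Mathlib

noncomputable section

noncomputable instance (n : ℕ) : Fintype (GaloisField 2 n) := Fintype.ofFinite _

/-- `(-1)^c` for `c ∈ F_2`. -/
def sgn (c : ZMod 2) : ℤ := if c = 0 then 1 else -1

/-- The absolute trace `Tr : F_{2^n} → F_2`. -/
def Tr {n : ℕ} (x : GaloisField 2 n) : ZMod 2 :=
  Algebra.trace (ZMod 2) (GaloisField 2 n) x

/-- Walsh–Hadamard transform of a Boolean function on `F_{2^n}`. -/
def walsh {n : ℕ} (f : GaloisField 2 n → ZMod 2) (μ : GaloisField 2 n) : ℤ :=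
  ∑ x : GaloisField 2 n, sgn (f x + Tr (μ * x))

/-- `f` is bent (where `n = 2m`): all Walsh coefficients are `±2^m`. -/
def IsBent {n : ℕ} (m : ℕ) (f : GaloisField 2 n → ZMod 2) : Prop :=
  ∀ μ, walsh f μ = 2 ^ m ∨ walsh f μ = -(2 ^ m)

/-- `fs` is the dual of the bent function `f` (where `n = 2m`). -/
def IsDualOf {n : ℕ} (m : ℕ) (fs f : GaloisField 2 n → ZMod 2) : Prop :=
  ∀ μ, walsh f μ = 2 ^ m * sgn (fs μ)

/-! ### Auxiliary lemmas -/

lemma sgn_add' (a b : ZMod 2) : sgn (a + b) = sgn a * sgn b := by revert a b; decide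

lemma sgn_sum' {ι : Type*} (s : Finset ι) (f : ι → ZMod 2) :
    sgn (∑ i ∈ s, f i) = ∏ i ∈ s, sgn (f i) := by
  induction s using Finset.cons_induction with
  | empty => simp [sgn]
  | cons a s ha ih => rw [Finset.sum_cons, Finset.prod_cons, sgn_add', ih]

/-- dot product on `F_2^r`. -/
def dot {r : ℕ} (u v : Fin r → ZMod 2) : ZMod 2 := ∑ i, u i * v i

lemma dot_add' {r : ℕ} (u v w : Fin r → ZMod 2) :
    dot u (fun i => v i + w i) = dot u v + dot u w := by
  simp [dot, mul_add, Finset.sum_add_distrib]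

lemma sum_sgn_dot {r : ℕ} (v : Fin r → ZMod 2) :
    ∑ u : Fin r → ZMod 2, sgn (dot u v) = if v = 0 then (2:ℤ)^r else 0 := by
  have key : ∀ a : ZMod 2, (∑ b : ZMod 2, sgn (b * a)) = if a = 0 then (2:ℤ) else 0 := by
    intro a
    rw [show (Finset.univ : Finset (ZMod 2)) = {0, 1} by decide,
      Finset.sum_insert (by decide), Finset.sum_singleton]
    revert a; decide
  calc ∑ u : Fin r → ZMod 2, sgn (dot u v)
      = ∑ u ∈ Fintype.piFinset (fun _ : Fin r => Finset.univ), ∏ i, sgn (u i * v i) := by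
        rw [Fintype.piFinset_univ]; exact Finset.sum_congr rfl fun u _ => sgn_sum' _ _
    _ = ∏ i : Fin r, ∑ b : ZMod 2, sgn (b * v i) :=
        (Finset.prod_univ_sum (fun _ : Fin r => (Finset.univ : Finset (ZMod 2)))
          (fun i b => sgn (b * v i))).symm
    _ = ∏ i : Fin r, (if v i = 0 then (2:ℤ) else 0) := by simp_rw [key]
    _ = if v = 0 then (2:ℤ)^r else 0 := by
        by_cases hv : v = 0
        · simp [hv]
        · rw [if_neg hv]
          obtain ⟨i, hi⟩ := Function.ne_iff.mp hv
          exact Finset.prod_eq_zero (Finset.mem_univ i) (by simpa using hi)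

lemma expandF {r : ℕ} (F : (Fin r → ZMod 2) → ZMod 2) (y : ZMod 2) (g : Fin r → ZMod 2) :
    ∑ c : Fin r → ZMod 2, ∑ u : Fin r → ZMod 2, sgn (y + F c + dot u (fun i => g i + c i)) =
      2 ^ r * sgn (y + F g) := by
  have hz : ∀ a b : ZMod 2, a + b = 0 ↔ b = a := by decide
  have step : ∀ c : Fin r → ZMod 2,
      (∑ u : Fin r → ZMod 2, sgn (y + F c + dot u (fun i => g i + c i)))
      = sgn (y + F c) * (if c = g then (2:ℤ)^r else 0) := by
    intro c
    have h2 : ((fun i => g i + c i) = (0 : Fin r → ZMod 2)) ↔ c = g := by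
      rw [funext_iff, funext_iff]
      exact forall_congr' fun i => hz (g i) (c i)
    rw [← if_congr h2 rfl rfl, ← sum_sgn_dot, Finset.mul_sum]
    exact Finset.sum_congr rfl fun u _ => sgn_add' _ _
  simp_rw [step, mul_ite, mul_zero]
  simp [mul_comm]

/-- the vector of coordinate functions appearing in `h`. -/
def gfun {n k : ℕ} (f : GaloisField 2 n → ZMod 2) (α : GaloisField 2 n)
    (μ : Fin k → GaloisField 2 n) (x : GaloisField 2 n) : Fin (k + 1) → ZMod 2 :=
  Fin.cons (f x + f (x + α)) (fun i => Tr (μ i * x))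

/-- the vector of coordinate functions appearing in the dual. -/
def phifun {n k : ℕ} (fs : GaloisField 2 n → ZMod 2) (α : GaloisField 2 n)
    (μ : Fin k → GaloisField 2 n) (w : GaloisField 2 n) : Fin (k + 1) → ZMod 2 :=
  Fin.cons (Tr (α * w)) (fun i => fs w + fs (w + μ i))

lemma Tr_add {n : ℕ} (a b : GaloisField 2 n) : Tr (a + b) = Tr a + Tr b :=
  map_add (Algebra.trace (ZMod 2) (GaloisField 2 n)) a b

lemma Tr_smul {n : ℕ} (c : ZMod 2) (a : GaloisField 2 n) : Tr (c • a) = c * Tr a := by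
  simp only [Tr, map_smul, smul_eq_mul]

lemma Tr_sum_smul {n k : ℕ} (c : Fin k → ZMod 2) (μ : Fin k → GaloisField 2 n)
    (x : GaloisField 2 n) :
    Tr ((∑ i, c i • μ i) * x) = ∑ i, c i * Tr (μ i * x) := by
  rw [Finset.sum_mul]
  simp_rw [smul_mul_assoc]
  rw [show Tr (∑ i, c i • (μ i * x)) = ∑ i, Tr (c i • (μ i * x)) from
    map_sum (Algebra.trace (ZMod 2) (GaloisField 2 n)) _ _]
  exact Finset.sum_congr rfl fun i _ => Tr_smul _ _

/-- The main computation of the Walsh transform of `h`. -/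
lemma main_walsh {n m k : ℕ}
    (f fs : GaloisField 2 n → ZMod 2) (hfd : IsDualOf m fs f)
    (α : GaloisField 2 n) (μ : Fin k → GaloisField 2 n)
    (hα : ∀ i, Tr (α * μ i) = 0)
    (hD' : ∀ i j : Fin k, i ≠ j →
      ∀ x, fs (x + μ i + μ j) = fs x + fs (x + μ i) + fs (x + μ j))
    (F : (Fin (k + 1) → ZMod 2) → ZMod 2) (w : GaloisField 2 n) :
    walsh (fun x => f x + F (gfun f α μ x)) w = 2 ^ m * sgn (fs w + F (phifun fs α μ w)) := by
  have h01 : ∀ b : ZMod 2, b = 0 ∨ b = 1 := by decide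
  -- shifting along sums of the μ i
  have sumshift : ∀ (c : Fin k → ZMod 2) (t : Finset (Fin k)) (w : GaloisField 2 n),
      fs (w + ∑ i ∈ t, c i • μ i) = fs w + ∑ i ∈ t, c i * (fs w + fs (w + μ i)) := by
    intro c t
    induction t using Finset.cons_induction with
    | empty => intro w; simp
    | cons a t ha ih =>
      intro w
      rw [Finset.sum_cons, Finset.sum_cons, ← add_assoc w, ih (w + c a • μ a)]
      rcases h01 (c a) with h0 | h1
      · simp [h0]
      · rw [h1, one_smul, one_mul]
        have hsum : ∑ i ∈ t, c i * (fs (w + μ a) + fs (w + μ a + μ i))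
            = ∑ i ∈ t, c i * (fs w + fs (w + μ i)) := by
          refine Finset.sum_congr rfl fun i hi => ?_
          have hne : a ≠ i := fun h => ha (h ▸ hi)
          rw [hD' a i hne w]
          congr 1
          generalize fs (w + μ a) = A
          generalize fs w = B
          generalize fs (w + μ i) = C
          revert A B C; decide
        rw [hsum]
        generalize fs (w + μ a) = A
        generalize fs w = B
        generalize (∑ i ∈ t, c i * (B + fs (w + μ i))) = S
        revert A B S; decide
  -- the inner sum over x, for a fixed u
  have inner : ∀ (u : Fin (k+1) → ZMod 2),
      (∑ x : GaloisField 2 n, sgn (f x + dot u (gfun f α μ x) + Tr (w * x)))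
        = 2 ^ m * sgn (fs w + dot u (phifun fs α μ w)) := by
    intro u
    set s : GaloisField 2 n := ∑ i, u i.succ • μ i with hs
    have hdotg : ∀ x, dot u (gfun f α μ x) = u 0 * (f x + f (x + α)) + Tr (s * x) := by
      intro x
      rw [dot, Fin.sum_univ_succ]
      simp only [gfun, Fin.cons_zero, Fin.cons_succ]
      rw [hs, Tr_sum_smul]
    have hDval : fs (w + s) = fs w + ∑ i, u i.succ * (fs w + fs (w + μ i)) :=
      sumshift (fun i => u i.succ) Finset.univ w
    have hdotφ : dot u (phifun fs α μ w)
        = u 0 * Tr (α * w) + ∑ i, u i.succ * (fs w + fs (w + μ i)) := by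
      rw [dot, Fin.sum_univ_succ]
      simp only [phifun, Fin.cons_zero, Fin.cons_succ]
    have hTrws : ∀ x, Tr ((w + s) * x) = Tr (w * x) + Tr (s * x) := by
      intro x; rw [add_mul, Tr_add]
    rcases h01 (u 0) with h0 | h1
    · have harg : ∀ x, f x + dot u (gfun f α μ x) + Tr (w * x) = f x + Tr ((w + s) * x) := by
        intro x
        rw [hdotg, h0, zero_mul, zero_add, hTrws]
        ring
      calc (∑ x : GaloisField 2 n, sgn (f x + dot u (gfun f α μ x) + Tr (w * x)))
          = walsh f (w + s) := Finset.sum_congr rfl fun x _ => by rw [harg x]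
        _ = 2 ^ m * sgn (fs (w + s)) := hfd _
        _ = 2 ^ m * sgn (fs w + dot u (phifun fs α μ w)) := by
            rw [hDval, hdotφ, h0, zero_mul, zero_add]
    · have hTrsα : Tr (s * α) = 0 := by
        rw [hs, Tr_sum_smul]
        refine Finset.sum_eq_zero fun i _ => ?_
        rw [mul_comm (μ i) α, hα, mul_zero]
      have harg : ∀ x, f x + dot u (gfun f α μ x) + Tr (w * x)
          = f (x + α) + Tr ((w + s) * x) := by
        intro x
        rw [hdotg, h1, one_mul, hTrws x]
        generalize f x = A
        generalize f (x + α) = B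
        generalize Tr (s * x) = T1
        generalize Tr (w * x) = T2
        revert A B T1 T2; decide
      have hre : (∑ x : GaloisField 2 n, sgn (f (x + α) + Tr ((w + s) * x)))
          = ∑ x : GaloisField 2 n, sgn ((f x + Tr ((w + s) * x)) + Tr ((w + s) * α)) := by
        refine Fintype.sum_bijective (fun x => x + α) (Equiv.addRight α).bijective _ _ ?_
        intro x
        congr 1
        rw [mul_add, Tr_add]
        generalize f (x + α) = B
        generalize Tr ((w + s) * x) = T
        generalize Tr ((w + s) * α) = a
        revert B T a; decide
      have hTrα : Tr ((w + s) * α) = Tr (w * α) := by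
        rw [add_mul, Tr_add, hTrsα, add_zero]
      calc (∑ x : GaloisField 2 n, sgn (f x + dot u (gfun f α μ x) + Tr (w * x)))
          = ∑ x : GaloisField 2 n, sgn (f (x + α) + Tr ((w + s) * x)) :=
            Finset.sum_congr rfl fun x _ => by rw [harg x]
        _ = ∑ x : GaloisField 2 n, sgn ((f x + Tr ((w + s) * x)) + Tr ((w + s) * α)) := hre
        _ = ∑ x : GaloisField 2 n, sgn (f x + Tr ((w + s) * x)) * sgn (Tr ((w + s) * α)) :=
            Finset.sum_congr rfl fun x _ => sgn_add' _ _
        _ = walsh f (w + s) * sgn (Tr ((w + s) * α)) := by rw [← Finset.sum_mul]; rfl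
        _ = 2 ^ m * (sgn (fs (w + s)) * sgn (Tr (w * α))) := by rw [hfd, hTrα, mul_assoc]
        _ = 2 ^ m * sgn (fs (w + s) + Tr (w * α)) := by rw [← sgn_add']
        _ = 2 ^ m * sgn (fs w + dot u (phifun fs α μ w)) := by
            rw [hDval, hdotφ, h1, one_mul]
            refine congrArg _ (congrArg _ ?_)
            rw [mul_comm w α]
            ring
  -- the full Walsh transform
  have cancel : ((2:ℤ) ^ (k+1)) ≠ 0 := pow_ne_zero _ two_ne_zero
  refine mul_left_cancel₀ cancel ?_
  calc (2:ℤ)^(k+1) * walsh (fun x => f x + F (gfun f α μ x)) w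
      = ∑ x : GaloisField 2 n, (2:ℤ)^(k+1) * sgn ((f x + F (gfun f α μ x)) + Tr (w * x)) := by
        rw [walsh, Finset.mul_sum]
    _ = ∑ x : GaloisField 2 n, ∑ c : Fin (k+1) → ZMod 2, ∑ u : Fin (k+1) → ZMod 2,
          sgn ((f x + Tr (w * x)) + F c + dot u (fun i => gfun f α μ x i + c i)) := by
        refine Finset.sum_congr rfl fun x _ => ?_
        rw [expandF F (f x + Tr (w * x)) (gfun f α μ x)]
        exact congrArg _ (congrArg _ (by ring))
    _ = ∑ c : Fin (k+1) → ZMod 2, ∑ u : Fin (k+1) → ZMod 2, ∑ x : GaloisField 2 n,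
          sgn ((f x + Tr (w * x)) + F c + dot u (fun i => gfun f α μ x i + c i)) := by
        rw [Finset.sum_comm]
        exact Finset.sum_congr rfl fun c _ => Finset.sum_comm
    _ = ∑ c : Fin (k+1) → ZMod 2, ∑ u : Fin (k+1) → ZMod 2,
          sgn (F c + dot u c) * (2 ^ m * sgn (fs w + dot u (phifun fs α μ w))) := by
        refine Finset.sum_congr rfl fun c _ => Finset.sum_congr rfl fun u _ => ?_
        rw [← inner u, Finset.mul_sum]
        refine Finset.sum_congr rfl fun x _ => ?_
        rw [← sgn_add', dot_add']
        exact congrArg _ (by ring)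
    _ = 2 ^ m * ∑ c : Fin (k+1) → ZMod 2, ∑ u : Fin (k+1) → ZMod 2,
          sgn (fs w + F c + dot u (fun i => phifun fs α μ w i + c i)) := by
        rw [Finset.mul_sum]
        refine Finset.sum_congr rfl fun c _ => ?_
        rw [Finset.mul_sum]
        refine Finset.sum_congr rfl fun u _ => ?_
        rw [dot_add', mul_left_comm, ← sgn_add']
        exact congrArg _ (congrArg _ (by ring))
    _ = 2 ^ m * (2 ^ (k+1) * sgn (fs w + F (phifun fs α μ w))) := by
        rw [expandF F (fs w) (phifun fs α μ w)]
    _ = 2 ^ (k+1) * (2 ^ m * sgn (fs w + F (phifun fs α μ w))) := by ring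

/-- Corollary: with `r = k + 1`, if `Tr(α μ_i) = 0` and `D_{μ_i}D_{μ_j} f* = 0` for `i < j`,
then `h(x) = f(x) + F(f(x)+f(x+α), Tr(μ_2 x), …, Tr(μ_r x))` is bent with dual
`f*(x) + F(Tr(α x), φ_2(x), …, φ_r(x))` where `φ_i(x) = f*(x)+f*(x+μ_i)`. -/
theorem statement10 {n m k : ℕ} (hn : n = 2 * m)
    (f fs : GaloisField 2 n → ZMod 2)
    (hf : IsBent m f) (hfd : IsDualOf m fs f)
    (α : GaloisField 2 n)
    (μ : Fin k → GaloisField 2 n) (hμ : ∀ i, μ i ≠ 0)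
    (hα : ∀ i, Tr (α * μ i) = 0)
    (hD : ∀ i j : Fin k, i < j →
      ∀ x, fs x + fs (x + μ i) + fs (x + μ j) + fs (x + μ i + μ j) = 0)
    (F : (Fin (k + 1) → ZMod 2) → ZMod 2) :
    IsBent m (fun x => f x + F (Fin.cons (f x + f (x + α)) (fun i => Tr (μ i * x)))) ∧
      IsDualOf m
        (fun x => fs x + F (Fin.cons (Tr (α * x)) (fun i => fs x + fs (x + μ i))))
        (fun x => f x + F (Fin.cons (f x + f (x + α)) (fun i => Tr (μ i * x)))) := by
  have z3 : ∀ A B C D : ZMod 2, A + B + C + D = 0 → D = A + B + C := by decide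
  have hD' : ∀ i j : Fin k, i ≠ j →
      ∀ x, fs (x + μ i + μ j) = fs x + fs (x + μ i) + fs (x + μ j) := by
    intro i j hij x
    rcases Ne.lt_or_gt hij with h | h
    · exact z3 _ _ _ _ (hD i j h x)
    · have h2 := z3 _ _ _ _ (hD j i h x)
      rw [show x + μ j + μ i = x + μ i + μ j from by ring] at h2
      rw [h2]; ring
  have main := main_walsh f fs hfd α μ hα hD' F
  have hdual : IsDualOf m
      (fun x => fs x + F (Fin.cons (Tr (α * x)) (fun i => fs x + fs (x + μ i))))
      (fun x => f x + F (Fin.cons (f x + f (x + α)) (fun i => Tr (μ i * x)))) := by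
    intro w
    exact main w
  refine ⟨fun w => ?_, hdual⟩
  rw [hdual w]
  have : sgn (fs w + F (Fin.cons (Tr (α * w)) (fun i => fs w + fs (w + μ i)))) = 1 ∨
      sgn (fs w + F (Fin.cons (Tr (α * w)) (fun i => fs w + fs (w + μ i)))) = -1 := by
    unfold sgn; split <;> simp
  rcases this with h | h
  · left; rw [h, mul_one]
  · right; rw [h, mul_neg_one]
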